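/- For a positively t-determined module M, the map Φ_M: M → r^*M defined on a homogeneous element u ∈ M_a by Φ_M(u) = (φ_a^M)^{-1}(x^{a·(t−1)}·u), where φ_a^M: M_{r(a)} → M_{a·t} is the multiplication by x^{a·t − r(a)}, is a well-defined morphism of ℤ^n-graded S-modules; moreover, if M is squarefree (positively 1-determined) then Φ_M is an isomorphism. -/

import Mathlib

open MvPolynomial

noncomputable def mono (K : Type) [Field K] {n : ℕ} (a : Fin n → ℕ) : MvPolynomial (Fin n) K :=
  monomial (Finsupp.equivFunOnFinite.symm a) 1

def rmap {n : ℕ} (t a : Fin n → ℕ) : Fin n → ℕ := fun i => if 0 < a i then t i else 0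

def sqrtv {n : ℕ} (a : Fin n → ℕ) : Fin n → ℕ := fun i => if 0 < a i then 1 else 0

structure MultiGrading (K : Type) [Field K] (n : ℕ) (M : Type) [AddCommGroup M]
    [Module (MvPolynomial (Fin n) K) M] [Module K M]
    [IsScalarTower K (MvPolynomial (Fin n) K) M] where
  g : (Fin n → ℕ) → Submodule K M
  internal : DirectSum.IsInternal g
  compat : ∀ a b : Fin n → ℕ, ∀ m ∈ g a, mono K b • m ∈ g (a + b)

variable {K : Type} [Field K] {n : ℕ}

def PosDetermined {M : Type} [AddCommGroup M] [Module (MvPolynomial (Fin n) K) M] [Module K M]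
    [IsScalarTower K (MvPolynomial (Fin n) K) M] (G : MultiGrading K n M) (t : Fin n → ℕ) : Prop :=
  ∀ (a : Fin n → ℕ) (i : Fin n), t i ≤ a i →
    Set.BijOn (fun m => (X i : MvPolynomial (Fin n) K) • m) (G.g a : Set M) (G.g (a + Pi.single i 1) : Set M)

def IsRStar {M N : Type} [AddCommGroup M] [Module (MvPolynomial (Fin n) K) M] [Module K M]
    [IsScalarTower K (MvPolynomial (Fin n) K) M]
    [AddCommGroup N] [Module (MvPolynomial (Fin n) K) N] [Module K N]
    [IsScalarTower K (MvPolynomial (Fin n) K) N]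
    (t : Fin n → ℕ) (G : MultiGrading K n M) (H : MultiGrading K n N) : Prop :=
  ∃ e : (Fin n → ℕ) → (M →ₗ[K] N),
    (∀ a, Set.InjOn (e a) (G.g (rmap t a))) ∧
    (∀ a, e a '' (G.g (rmap t a)) = (H.g a : Set N)) ∧
    (∀ a b : Fin n → ℕ, ∀ m ∈ G.g (rmap t a),
      e (a + b) (mono K (rmap t (a + b) - rmap t a) • m) = mono K b • e a m)

noncomputable def mdim (R : Type) [CommRing R] (M : Type) [AddCommGroup M] [Module R M] :
    WithBot ℕ∞ :=
  ringKrullDim (R ⧸ (⊤ : Submodule R M).annihilator)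

noncomputable def mdepth (K : Type) [Field K] (n : ℕ) (M : Type) [AddCommGroup M] [Module (MvPolynomial (Fin n) K) M] : ℕ :=
  sSup {k : ℕ | ∃ rs : List (MvPolynomial (Fin n) K), rs.length = k ∧
    (∀ r ∈ rs, r ∈ Ideal.span (Set.range (X : Fin n → MvPolynomial (Fin n) K))) ∧
    RingTheory.Sequence.IsRegular M rs}

noncomputable def IsCM (K : Type) [Field K] (n : ℕ) (M : Type) [AddCommGroup M] [Module (MvPolynomial (Fin n) K) M] : Prop :=
  (mdepth K n M : WithBot ℕ∞) = mdim (MvPolynomial (Fin n) K) M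

/-! Multiplication by `x^c` maps `M_b` bijectively onto `M_{b+c}` as soon as `t_i ≤ b_i` wherever
`c_i > 0`: it factors into the bijections `x_i : M_b → M_{b + e_i}` (`t_i ≤ b_i`) that define
positive `t`-determinedness. Hence `φ_a` is an isomorphism and `Φ_M` is well defined degree by
degree; comparing exponents in degrees `a` and `a + b` shows that it intertwines `x^b` on `M`
with `x^{r(a+b) - r(a)}` on `r^*M`, so it is `S`-linear. If `M` is squarefree,
`x^{a·(t-1)} : M_a → M_{a·t}` is bijective too, so `Φ_M` is bijective in every degree. -/

open DirectSum

theorem mono_add (a b : Fin n → ℕ) : mono K (a + b) = mono K a * mono K b := by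
  have : Finsupp.equivFunOnFinite.symm (a + b) =
      Finsupp.equivFunOnFinite.symm a + Finsupp.equivFunOnFinite.symm b := by ext; simp
  rw [mono, mono, mono, monomial_mul, one_mul, this]

theorem mono_zero : mono K (0 : Fin n → ℕ) = 1 := by
  have : Finsupp.equivFunOnFinite.symm (0 : Fin n → ℕ) = 0 := by ext; simp
  rw [mono, this, monomial_zero', C_1]

theorem mono_single_one (i : Fin n) : mono K (Pi.single i 1) = X i := by
  classical
  rw [mono, Finsupp.equivFunOnFinite_symm_single]
  rfl

theorem MvPolynomial.map_smul_of_map_X_smul {σ R M N : Type*} [CommSemiring R]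
    [AddCommMonoid M] [Module (MvPolynomial σ R) M] [Module R M]
    [IsScalarTower R (MvPolynomial σ R) M]
    [AddCommMonoid N] [Module (MvPolynomial σ R) N] [Module R N]
    [IsScalarTower R (MvPolynomial σ R) N]
    (f : M →ₗ[R] N)
    (hf : ∀ i m, f ((X i : MvPolynomial σ R) • m) = (X i : MvPolynomial σ R) • f m)
    (p : MvPolynomial σ R) (m : M) : f (p • m) = p • f m := by
  induction p using MvPolynomial.induction_on generalizing m with
  | C r => rw [← algebraMap_eq, algebraMap_smul, algebraMap_smul, map_smul]
  | add p q hp hq => rw [add_smul, map_add, hp, hq, add_smul]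
  | mul_X p i hp => rw [mul_smul, hp, hf, mul_smul]

namespace DirectSum.IsInternal

variable {ι R M N P : Type*} [DecidableEq ι] [Semiring R]
  [AddCommMonoid M] [Module R M] [AddCommMonoid N] [Module R N] [AddCommMonoid P] [Module R P]
  {A : ι → Submodule R M} {B : ι → Submodule R N}

theorem linearMap_ext (hA : IsInternal A) {f g : M →ₗ[R] P}
    (hfg : ∀ i, ∀ x ∈ A i, f x = g x) : f = g := by
  refine LinearMap.ext fun x => ?_
  refine Submodule.iSup_induction A (motive := fun x => f x = g x)
    (hA.submodule_iSup_eq_top ▸ Submodule.mem_top) hfg (by simp) fun x y hx hy => ?_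
  rw [map_add, map_add, hx, hy]

noncomputable def gradedMap (hA : IsInternal A) (g : ∀ i, A i →ₗ[R] B i) : M →ₗ[R] N :=
  coeLinearMap B ∘ₗ (DFinsupp.mapRange.linearMap g : (⨁ i, A i) →ₗ[R] ⨁ i, B i) ∘ₗ
    (LinearEquiv.ofBijective (coeLinearMap A) hA).symm.toLinearMap

theorem gradedMap_apply_of_mem (hA : IsInternal A) (g : ∀ i, A i →ₗ[R] B i) {i : ι} {x : M}
    (hx : x ∈ A i) : hA.gradedMap g x = g i ⟨x, hx⟩ := by
  have hE : (LinearEquiv.ofBijective (coeLinearMap A) hA).symm x =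
      lof R ι (fun i => A i) i ⟨x, hx⟩ :=
    (LinearEquiv.symm_apply_eq _).2 (coeLinearMap_of A i ⟨x, hx⟩).symm
  simp only [gradedMap, LinearMap.comp_apply, LinearEquiv.coe_coe, hE]
  exact (congrArg (coeLinearMap B) (DFinsupp.mapRange_single (hf := fun i => map_zero (g i)))).trans
    (coeLinearMap_of B i _)

theorem gradedMap_bijective (hA : IsInternal A) (hB : IsInternal B) {g : ∀ i, A i →ₗ[R] B i}
    (hg : ∀ i, Function.Bijective (g i)) : Function.Bijective (hA.gradedMap g) :=
  hB.comp <|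
    (DFinsupp.mapRange.linearEquiv fun i => LinearEquiv.ofBijective (g i) (hg i)).bijective.comp
      (LinearEquiv.ofBijective (coeLinearMap A) hA).symm.bijective

end DirectSum.IsInternal

theorem rmap_le_mul (t a : Fin n → ℕ) : rmap t a ≤ a * t := fun i => by
  simp only [rmap, Pi.mul_apply]
  split_ifs with h
  · exact Nat.le_mul_of_pos_left _ h
  · exact Nat.zero_le _

theorem rmap_mono (t : Fin n → ℕ) : Monotone (rmap t) := fun a b hab i => by
  have : a i ≤ b i := hab i
  simp only [rmap]
  split_ifs <;> omega

theorem le_rmap_of_pos_mul_tsub_rmap {t a : Fin n → ℕ} {i : Fin n}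
    (h : 0 < (a * t - rmap t a) i) : t i ≤ rmap t a i := by
  simp only [rmap, Pi.sub_apply, Pi.mul_apply] at h ⊢
  split_ifs with ha
  · exact le_rfl
  · simp [Nat.eq_zero_of_not_pos ha] at h

theorem add_mul_tsub_one_eq_mul {t : Fin n → ℕ} (ht : ∀ i, 1 ≤ t i) (a : Fin n → ℕ) :
    a + a * (t - 1) = a * t := funext fun i => by
  obtain ⟨s, hs⟩ := Nat.exists_eq_add_of_le' (ht i)
  simp only [Pi.add_apply, Pi.mul_apply, Pi.sub_apply, Pi.one_apply, hs, Nat.add_sub_cancel]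
  ring

namespace MultiGrading

variable {M : Type} [AddCommGroup M] [Module (MvPolynomial (Fin n) K) M] [Module K M]
  [IsScalarTower K (MvPolynomial (Fin n) K) M] (G : MultiGrading K n M)

theorem bijOn_mono_smul {t : Fin n → ℕ} (hM : PosDetermined G t) (c : Fin n → ℕ)
    {b : Fin n → ℕ} (hb : ∀ i, 0 < c i → t i ≤ b i) :
    Set.BijOn (mono K c • ·) (G.g b : Set M) (G.g (b + c) : Set M) := by
  induction c using WellFoundedLT.induction generalizing b with
  | _ c ih =>
  rcases eq_or_ne c 0 with rfl | hc
  · simp only [add_zero, mono_zero, one_smul]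
    exact Set.bijOn_id _
  obtain ⟨i, hi⟩ : ∃ i, c i ≠ 0 := Function.ne_iff.mp hc
  set c' := c - Pi.single i 1
  have hc' : c' + Pi.single i 1 = c := funext fun j => by
    rcases eq_or_ne j i with rfl | hj
    · simp only [c', Pi.add_apply, Pi.sub_apply, Pi.single_eq_same]
      omega
    · simp [c', hj]
  have hlt : c' < c :=
    hc' ▸ lt_add_of_pos_right c' (Pi.lt_def.2 ⟨fun _ => zero_le, i, by simp⟩)
  have hb' : ∀ j, 0 < c' j → t j ≤ b j := fun j hj => hb j (hj.trans_le (hlt.le j))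
  have hti : t i ≤ (b + c') i := (hb i (Nat.pos_of_ne_zero hi)).trans le_self_add
  have key := (hM (b + c') i hti).comp (ih c' hlt hb')
  have hsmul :
      (fun m : M => (X i : MvPolynomial (Fin n) K) • mono K c' • m) = (mono K c • ·) :=
    funext fun m => by rw [← mono_single_one, smul_smul, ← mono_add, add_comm, hc']
  rwa [add_assoc, hc', Function.comp_def, hsmul] at key

noncomputable def mulMono (c : Fin n → ℕ) {b b' : Fin n → ℕ} (h : b + c = b') :
    G.g b →ₗ[K] G.g b' :=
  (DistribSMul.toLinearMap K M (mono K c)).restrict fun m hm => h ▸ G.compat b c m hm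

theorem mulMono_bijective {t : Fin n → ℕ} (hM : PosDetermined G t) {b c b' : Fin n → ℕ}
    (h : b + c = b') (hc : ∀ i, 0 < c i → t i ≤ b i) :
    Function.Bijective (G.mulMono c h) := by
  subst h
  exact (G.bijOn_mono_smul hM c hc).bijective

section Phi

variable {t : Fin n → ℕ} (hM : PosDetermined G t)

/- `phiEquiv a` is the paper's `φ_a^M`; `phiComponent a` is `Φ_M` in degree `a`, with values in
`(r^*M)_a = M_{r(a)}`. -/
noncomputable def phiEquiv (a : Fin n → ℕ) : G.g (rmap t a) ≃ₗ[K] G.g (a * t) :=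
  LinearEquiv.ofBijective _ <| G.mulMono_bijective hM (add_tsub_cancel_of_le (rmap_le_mul t a))
    fun _ => le_rmap_of_pos_mul_tsub_rmap

variable (ht : ∀ i, 1 ≤ t i)

noncomputable def phiComponent (a : Fin n → ℕ) : G.g a →ₗ[K] G.g (rmap t a) :=
  (G.phiEquiv hM a).symm.toLinearMap ∘ₗ G.mulMono (a * (t - 1)) (add_mul_tsub_one_eq_mul ht a)

theorem mono_smul_phiComponent (a : Fin n → ℕ) (u : G.g a) :
    mono K (a * t - rmap t a) • (G.phiComponent hM ht a u : M) =
      mono K (a * (t - 1)) • (u : M) :=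
  congrArg Subtype.val ((G.phiEquiv hM a).apply_symm_apply _)

theorem phiComponent_eq {a : Fin n → ℕ} (u : G.g a) {v : M} (hv : v ∈ G.g (rmap t a))
    (h : mono K (a * t - rmap t a) • v = mono K (a * (t - 1)) • (u : M)) :
    (G.phiComponent hM ht a u : M) = v := by
  have : G.phiEquiv hM a ⟨v, hv⟩ = G.mulMono _ (add_mul_tsub_one_eq_mul ht a) u := Subtype.ext h
  rw [phiComponent, LinearMap.comp_apply, ← this]
  simp

theorem phiComponent_mono_smul {a : Fin n → ℕ} (b : Fin n → ℕ) (u : M) (hu : u ∈ G.g a) :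
    (G.phiComponent hM ht (a + b) ⟨mono K b • u, G.compat a b u hu⟩ : M) =
      mono K (rmap t (a + b) - rmap t a) • (G.phiComponent hM ht a ⟨u, hu⟩ : M) := by
  set v := G.phiComponent hM ht a ⟨u, hu⟩
  have hr : rmap t a ≤ rmap t (a + b) := rmap_mono t le_self_add
  have e1 : (a + b) * t - rmap t (a + b) + (rmap t (a + b) - rmap t a) =
      b * t + (a * t - rmap t a) := funext fun i => by
    have := rmap_le_mul t a i
    have := rmap_le_mul t (a + b) i
    have := hr i
    simp only [Pi.add_apply, Pi.sub_apply, Pi.mul_apply, add_mul] at *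
    omega
  have e2 : (a + b) * (t - 1) + b = b * t + a * (t - 1) := by
    rw [← add_mul_tsub_one_eq_mul ht b]
    ring
  have hv := G.compat _ (rmap t (a + b) - rmap t a) _ v.2
  rw [add_tsub_cancel_of_le hr] at hv
  refine G.phiComponent_eq hM ht _ hv ?_
  calc _ = mono K (b * t + (a * t - rmap t a)) • (v : M) := by rw [smul_smul, ← mono_add, e1]
    _ = mono K (b * t + a * (t - 1)) • u := by
      rw [mono_add, mul_smul, G.mono_smul_phiComponent, ← mul_smul, ← mono_add]
    _ = _ := by rw [smul_smul, ← mono_add, e2]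

theorem phiComponent_bijective (h1 : PosDetermined G (fun _ => 1)) (a : Fin n → ℕ) :
    Function.Bijective (G.phiComponent hM ht a) :=
  (G.phiEquiv hM a).symm.bijective.comp <| G.mulMono_bijective h1 _ fun i hi =>
    Nat.pos_of_ne_zero fun ha => by simp [ha] at hi

end Phi

end MultiGrading

/-- `N`, together with the identifications `e a : M_{r(a)} ≃ N_a`, realizes `r^*M`. -/
theorem phi_exists_general {M N : Type} [AddCommGroup M] [Module (MvPolynomial (Fin n) K) M]
    [Module K M] [IsScalarTower K (MvPolynomial (Fin n) K) M]
    [AddCommGroup N] [Module (MvPolynomial (Fin n) K) N] [Module K N]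
    [IsScalarTower K (MvPolynomial (Fin n) K) N]
    (t : Fin n → ℕ) (ht : ∀ i, 1 ≤ t i)
    (G : MultiGrading K n M)
    (hM : PosDetermined G t)
    (H : MultiGrading K n N)
    (e : (Fin n → ℕ) → (M →ₗ[K] N))
    (he1 : ∀ a, Set.InjOn (e a) (G.g (rmap t a)))
    (he2 : ∀ a, e a '' (G.g (rmap t a)) = (H.g a : Set N))
    (he3 : ∀ a b : Fin n → ℕ, ∀ m ∈ G.g (rmap t a),
      e (a + b) (mono K (rmap t (a + b) - rmap t a) • m) = mono K b • e a m) :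
    ∃ Φ : M →ₗ[MvPolynomial (Fin n) K] N,
      (∀ a : Fin n → ℕ, ∀ u ∈ G.g a, Φ u ∈ H.g a) ∧
      (∀ a : Fin n → ℕ, ∀ u ∈ G.g a, ∀ v ∈ G.g (rmap t a),
        mono K (a * t - rmap t a) • v = mono K (a * (t - 1)) • u → Φ u = e a v) ∧
      (PosDetermined G (fun _ => 1) → Function.Bijective Φ) := by
  let e' a : G.g (rmap t a) →ₗ[K] H.g a :=
    (e a).restrict fun v hv => by
      rw [← SetLike.mem_coe, ← he2 a]
      exact Set.mem_image_of_mem (e a) hv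
  let Φ := G.internal.gradedMap fun a => e' a ∘ₗ G.phiComponent hM ht a
  have hΦ a u (hu : u ∈ G.g a) : Φ u = e a (G.phiComponent hM ht a ⟨u, hu⟩) :=
    G.internal.gradedMap_apply_of_mem _ hu
  have hX (i : Fin n) : Φ ∘ₗ DistribSMul.toLinearMap K M (X i : MvPolynomial (Fin n) K) =
      DistribSMul.toLinearMap K N (X i : MvPolynomial (Fin n) K) ∘ₗ Φ := by
    refine G.internal.linearMap_ext fun a u hu => ?_
    simp only [LinearMap.comp_apply, DistribSMul.toLinearMap_apply, ← mono_single_one]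
    rw [hΦ _ _ (G.compat a _ u hu), hΦ a u hu, G.phiComponent_mono_smul,
      he3 a _ _ (Subtype.prop _)]
  have he' a : Function.Bijective (e' a) := by
    have hbij := (he1 a).bijOn_image
    rw [he2 a] at hbij
    exact hbij.bijective
  refine ⟨{ Φ with map_smul' := map_smul_of_map_X_smul Φ fun i => LinearMap.congr_fun (hX i) },
    fun a u hu => ?_, fun a u hu v hv h => ?_, fun h1 => ?_⟩
  · change Φ u ∈ H.g a
    rw [G.internal.gradedMap_apply_of_mem _ hu]
    exact Subtype.prop _
  · exact (hΦ a u hu).trans (congrArg (e a) (G.phiComponent_eq hM ht ⟨u, hu⟩ hv h))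
  · exact G.internal.gradedMap_bijective H.internal fun a =>
      (he' a).comp (G.phiComponent_bijective hM ht h1 a)

/-- for a positively `t`-determined module `M`, the map
`Φ_M : M → r^*M`, `u ∈ M_a ↦ (φ_a^M)⁻¹(x^{a·(t−1)}·u)`, where
`φ_a^M = x^{a·t − r(a)}· : M_{r(a)} → M_{a·t}`, is a well-defined morphism of graded modules,
and it is an isomorphism when `M` is squarefree (positively `1`-determined).
Here `N` together with the family `e` realizes `r^*M`. -/
theorem phi_exists {M N : Type} [AddCommGroup M] [Module (MvPolynomial (Fin n) K) M]
    [Module K M] [IsScalarTower K (MvPolynomial (Fin n) K) M]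
    [AddCommGroup N] [Module (MvPolynomial (Fin n) K) N] [Module K N]
    [IsScalarTower K (MvPolynomial (Fin n) K) N]
    (t : Fin n → ℕ) (ht : ∀ i, 1 ≤ t i)
    (G : MultiGrading K n M) [Module.Finite (MvPolynomial (Fin n) K) M]
    (hM : PosDetermined G t)
    (H : MultiGrading K n N)
    (e : (Fin n → ℕ) → (M →ₗ[K] N))
    (he1 : ∀ a, Set.InjOn (e a) (G.g (rmap t a)))
    (he2 : ∀ a, e a '' (G.g (rmap t a)) = (H.g a : Set N))
    (he3 : ∀ a b : Fin n → ℕ, ∀ m ∈ G.g (rmap t a),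
      e (a + b) (mono K (rmap t (a + b) - rmap t a) • m) = mono K b • e a m) :
    ∃ Φ : M →ₗ[MvPolynomial (Fin n) K] N,
      (∀ a : Fin n → ℕ, ∀ u ∈ G.g a, Φ u ∈ H.g a) ∧
      (∀ a : Fin n → ℕ, ∀ u ∈ G.g a, ∀ v ∈ G.g (rmap t a),
        mono K (a * t - rmap t a) • v = mono K (a * (t - 1)) • u → Φ u = e a v) ∧
      (PosDetermined G (fun _ => 1) → Function.Bijective Φ) :=
  phi_exists_general t ht G hM H e he1 he2 he3
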